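/- For all real a > 0 and b ≥ 0, ∫₀^∞ (a t² + b/t²) e^{−(a t² + b/t²)} dt = (√π / (4√a)) · (1 + 4√(ab)) · e^{−2√(ab)}. -/

import Mathlib

/-! With `p = √a` and `q = √b` one has `a t² + b / t² = (p t - q / t)² + 2 p q`, so the integrand
is `g (p t - q / t)` for the even function `g x = (x² + 2 p q) e^{-(x² + 2 p q)}`. The substitution
`x = p t - q / t` maps `(0, ∞)` onto `ℝ` with `dx = (p + q / t²) dt`, and the inversion
`t ↦ q / (p t)`, which changes the sign of `p t - q / t`, shows that the two terms of `dx`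
contribute equally. Hence `∫₀^∞ g (p t - q / t) dt = (2 p)⁻¹ ∫ g` (Cauchy–Schlömilch), and `∫ g` is
a combination of the first two even Gaussian moments. -/

open MeasureTheory Set

open Real

lemma Function.Even.integral_Ioi_eq_half_integral {g : ℝ → ℝ} (hg : g.Even) :
    ∫ x in Ioi 0, g x = (∫ x, g x) / 2 := by
  have hg_abs (x : ℝ) : g |x| = g x := by
    rcases abs_choice x with h | h <;> rw [h]
    exact hg x
  have h := integral_comp_abs (f := g)
  simp only [hg_abs] at h
  linarith

lemma integrable_sq_mul_exp_neg_sq : Integrable fun x : ℝ => x ^ 2 * exp (-x ^ 2) := by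
  have h := integrable_rpow_mul_exp_neg_mul_sq (b := 1) one_pos (s := 2) (by norm_num)
  simp only [neg_mul, one_mul] at h
  exact_mod_cast h

lemma integral_sq_mul_exp_neg_sq : ∫ x : ℝ, x ^ 2 * exp (-x ^ 2) = √π / 2 := by
  have hmoment := integral_rpow_mul_exp_neg_rpow (p := 2) (q := 2) two_pos (by norm_num)
  have hGamma := Gamma_nat_add_one_add_half 0
  norm_num at hmoment hGamma
  have hhalf := Function.Even.integral_Ioi_eq_half_integral
    (g := fun x : ℝ => x ^ 2 * exp (-x ^ 2)) (fun x => by simp only [neg_sq])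
  linarith

lemma integrable_sq_add_mul_exp_neg_sq_add (c : ℝ) :
    Integrable fun x : ℝ => (x ^ 2 + c) * exp (-(x ^ 2 + c)) := by
  refine ((integrable_sq_mul_exp_neg_sq.add
    ((integrable_exp_neg_mul_sq one_pos).const_mul c)).const_mul (exp (-c))).congr
    (.of_forall fun x => ?_)
  simp only [Pi.add_apply, neg_add, exp_add, neg_mul, one_mul]
  ring

lemma integral_sq_add_mul_exp_neg_sq_add (c : ℝ) :
    ∫ x : ℝ, (x ^ 2 + c) * exp (-(x ^ 2 + c)) = √π * (1 + 2 * c) / 2 * exp (-c) := by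
  have hgauss : ∫ x : ℝ, exp (-x ^ 2) = √π := by simpa using integral_gaussian 1
  have hsplit (x : ℝ) : (x ^ 2 + c) * exp (-(x ^ 2 + c)) =
      exp (-c) * (x ^ 2 * exp (-x ^ 2) + c * exp (-x ^ 2)) := by
    rw [neg_add, exp_add]; ring
  simp only [hsplit]
  rw [integral_const_mul, integral_add integrable_sq_mul_exp_neg_sq
    ((integrable_exp_neg_mul_sq one_pos).const_mul c |>.congr (by simp)), integral_const_mul,
    integral_sq_mul_exp_neg_sq, hgauss]
  ring

section Inversion

variable {E : Type*} [NormedAddCommGroup E] [NormedSpace ℝ E]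

lemma integral_Ioi_div_sq_smul_comp_div {c : ℝ} (hc : 0 < c) (g : ℝ → E) :
    ∫ t in Ioi 0, (c / t ^ 2) • g (c / t) = ∫ x in Ioi 0, g x := by
  have himage : (fun t => c / t) '' Ioi 0 = Ioi (0 : ℝ) := by
    ext x
    refine ⟨?_, fun hx => ⟨c / x, div_pos hc hx, div_div_cancel₀ hc.ne'⟩⟩
    rintro ⟨t, ht, rfl⟩
    exact div_pos hc ht
  have hderiv : ∀ t ∈ Ioi (0 : ℝ), HasDerivWithinAt (fun t => c / t) (-(c / t ^ 2)) (Ioi 0) t :=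
    fun t ht => by
      simpa [div_eq_mul_inv] using ((hasDerivAt_inv (ne_of_gt ht)).const_mul c).hasDerivWithinAt
  have hinj : InjOn (fun t => c / t) (Ioi 0) := fun s _ t _ hst => by
    simpa [div_div_cancel₀ hc.ne'] using congrArg (c / ·) hst
  conv_rhs =>
    rw [← himage, integral_image_eq_integral_abs_deriv_smul measurableSet_Ioi hderiv hinj]
  refine setIntegral_congr_fun measurableSet_Ioi fun t (ht : 0 < t) => ?_
  rw [abs_neg, abs_of_pos (by positivity)]

end Inversion

section CauchySchlomilch

variable {p q : ℝ}

lemma hasDerivAt_mul_sub_div (p q : ℝ) {t : ℝ} (ht : t ≠ 0) :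
    HasDerivAt (fun t => p * t - q / t) (p + q / t ^ 2) t := by
  simpa [div_eq_mul_inv] using
    ((hasDerivAt_id' t).const_mul p).fun_sub ((hasDerivAt_inv ht).const_mul q)

lemma strictMonoOn_mul_sub_div (hp : 0 < p) (hq : 0 ≤ q) :
    StrictMonoOn (fun t => p * t - q / t) (Ioi 0) := fun s (hs : 0 < s) t _ hst => by
  have hdiv : q / t ≤ q / s := div_le_div_of_nonneg_left hq hs hst.le
  dsimp only
  nlinarith

lemma image_mul_sub_div_Ioi (hp : 0 < p) (hq : 0 < q) :
    (fun t => p * t - q / t) '' Ioi 0 = univ := by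
  refine eq_univ_of_forall fun y => ?_
  -- the positive root of `p t² - y t - q = 0`
  set s := √(y ^ 2 + 4 * p * q)
  have hs_sq : s ^ 2 = y ^ 2 + 4 * p * q := sq_sqrt (by positivity)
  have hys : 0 < y + s := by
    nlinarith [abs_lt_of_sq_lt_sq' (show y ^ 2 < s ^ 2 by nlinarith) (sqrt_nonneg _), mul_pos hp hq]
  refine ⟨(y + s) / (2 * p), div_pos hys (by positivity), ?_⟩
  field_simp
  nlinarith

lemma integral_Ioi_comp_mul_sub_div_of_pos (hp : 0 < p) (hq : 0 < q) {g : ℝ → ℝ}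
    (hg_even : g.Even) (hg : Integrable g) :
    ∫ t in Ioi 0, g (p * t - q / t) = (∫ x, g x) / (2 * p) := by
  set u : ℝ → ℝ := fun t => p * t - q / t
  have hu_deriv : ∀ t ∈ Ioi (0 : ℝ), HasDerivWithinAt u (p + q / t ^ 2) (Ioi 0) t :=
    fun t ht => (hasDerivAt_mul_sub_div p q (ne_of_gt ht)).hasDerivWithinAt
  have hu_inj : InjOn u (Ioi 0) := (strictMonoOn_mul_sub_div hp hq.le).injOn
  have hderiv_pos (t : ℝ) : 0 < p + q / t ^ 2 := by positivity
  have hchange : ∫ x, g x = ∫ t in Ioi 0, (p + q / t ^ 2) * g (u t) := by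
    rw [← setIntegral_univ, ← image_mul_sub_div_Ioi hp hq,
      integral_image_eq_integral_abs_deriv_smul measurableSet_Ioi hu_deriv hu_inj]
    simp only [abs_of_pos (hderiv_pos _), smul_eq_mul]
  have hint_deriv : IntegrableOn (fun t => (p + q / t ^ 2) * g (u t)) (Ioi 0) := by
    have h := hg.integrableOn (s := u '' Ioi 0)
    simpa only [integrableOn_image_iff_integrableOn_abs_deriv_smul measurableSet_Ioi hu_deriv
      hu_inj, abs_of_pos (hderiv_pos _), smul_eq_mul] using h
  have hint : IntegrableOn (fun t => g (u t)) (Ioi 0) := by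
    have h : IntegrableOn (fun t => (p + q / t ^ 2)⁻¹ * ((p + q / t ^ 2) * g (u t))) (Ioi 0) := by
      refine hint_deriv.bdd_mul (c := p⁻¹) (Measurable.aestronglyMeasurable (by fun_prop))
        (.of_forall fun t => ?_)
      rw [norm_inv, Real.norm_of_nonneg (hderiv_pos t).le]
      exact inv_anti₀ hp (by simp only [le_add_iff_nonneg_right]; positivity)
    simpa only [inv_mul_cancel_left₀ (hderiv_pos _).ne'] using h
  have hint_div : IntegrableOn (fun t => q / t ^ 2 * g (u t)) (Ioi 0) :=
    (hint_deriv.sub (hint.const_mul p)).congr_fun (fun t _ => by simp only [Pi.sub_apply]; ring)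
      measurableSet_Ioi
  -- the inversion `t ↦ (q / p) / t` maps `u` to `-u`
  have hinv : ∫ t in Ioi 0, q / t ^ 2 * g (u t) = ∫ t in Ioi 0, p * g (u t) := by
    rw [← integral_Ioi_div_sq_smul_comp_div (div_pos hq hp)]
    refine setIntegral_congr_fun measurableSet_Ioi fun t (ht : 0 < t) => ?_
    have hu_inv : u (q / p / t) = -u t := by
      simp only [u]
      field_simp
      ring
    rw [hu_inv, hg_even, smul_eq_mul]
    field_simp
  calc ∫ t in Ioi 0, g (u t)
      = (∫ t in Ioi 0, (p * g (u t) + q / t ^ 2 * g (u t))) / (2 * p) := by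
        rw [integral_add (hint.const_mul p) hint_div, hinv, integral_const_mul]
        field_simp
        ring
    _ = (∫ x, g x) / (2 * p) := by
        simp only [hchange, add_mul]

lemma integral_Ioi_comp_mul_sub_div (hp : 0 < p) (hq : 0 ≤ q) {g : ℝ → ℝ}
    (hg_even : g.Even) (hg : Integrable g) :
    ∫ t in Ioi 0, g (p * t - q / t) = (∫ x, g x) / (2 * p) := by
  rcases hq.eq_or_lt with rfl | hq
  · simp only [zero_div, sub_zero]
    rw [integral_comp_mul_left_Ioi g 0 hp, mul_zero, hg_even.integral_Ioi_eq_half_integral,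
      smul_eq_mul]
    field_simp
  · exact integral_Ioi_comp_mul_sub_div_of_pos hp hq hg_even hg

end CauchySchlomilch

theorem stmt_4 (a b : ℝ) (ha : 0 < a) (hb : 0 ≤ b) :
    (∫ t in Ioi (0:ℝ), (a * t ^ 2 + b / t ^ 2) * Real.exp (-(a * t ^ 2 + b / t ^ 2))) =
      Real.sqrt Real.pi / (4 * Real.sqrt a) * (1 + 4 * Real.sqrt (a * b)) *
        Real.exp (-(2 * Real.sqrt (a * b))) := by
  set p := √a
  set q := √b
  have hp : 0 < p := sqrt_pos.2 ha
  have hpq : √(a * b) = p * q := sqrt_mul ha.le b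
  have hsq_complete (t : ℝ) (ht : t ≠ 0) :
      a * t ^ 2 + b / t ^ 2 = (p * t - q / t) ^ 2 + 2 * (p * q) := by
    rw [sub_sq, div_pow, mul_pow, sq_sqrt ha.le, sq_sqrt hb]
    field_simp
    ring
  rw [setIntegral_congr_fun measurableSet_Ioi fun t (ht : 0 < t) => by rw [hsq_complete t ht.ne'],
    integral_Ioi_comp_mul_sub_div hp (sqrt_nonneg b)
      (g := fun x => (x ^ 2 + 2 * (p * q)) * exp (-(x ^ 2 + 2 * (p * q))))
      (fun x => by simp only [neg_sq]) (integrable_sq_add_mul_exp_neg_sq_add _),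
    integral_sq_add_mul_exp_neg_sq_add, hpq]
  field_simp
  ring
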